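/- For every (x,y) ∈ ℝ², h(x,y) > √5, where h(x,y) = 2X₀(x) − x X₀'(x) + y² g(x) + √5. -/

import Mathlib

open Real Set

noncomputable def Gf (a : ℕ → ℝ) : ℝ → ℝ :=
  fun x => ∑' k : ℕ, (2 * (k : ℝ) + 2) * a (k + 1) * x ^ (2 * k)

noncomputable def D2f (a : ℕ → ℝ) : ℝ → ℝ :=
  fun x => ∑' k : ℕ, (2 * (k : ℝ) + 2) * (2 * (k : ℝ)) * a (k + 1) * x ^ (2 * k - 1)

noncomputable def D3f (a : ℕ → ℝ) : ℝ → ℝ :=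
  fun x => ∑' k : ℕ, (2 * (k : ℝ) + 2) * (2 * (k : ℝ)) * ((2 * k - 1 : ℕ) : ℝ) * a (k + 1)
    * x ^ (2 * k - 1 - 1)

def Dec (a : ℕ → ℝ) : Prop := ∀ k : ℕ, |a (k + 1)| ≤ 1 / (4 ^ k * (Nat.factorial k) ^ 2)

lemma cube_le (k : ℕ) : ((k : ℝ) + 1) ^ 3 ≤ 8 ^ k * (Nat.factorial k) := by
  induction k with
  | zero => norm_num
  | succ n ih =>
    have hn : (0:ℝ) ≤ (n : ℝ) := n.cast_nonneg
    have h1 : ((n : ℝ) + 1 + 1) ^ 3 ≤ 8 * ((n : ℝ) + 1) ^ 3 := by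
      nlinarith [pow_nonneg hn 3, sq_nonneg ((n:ℝ))]
    have hf : (n.factorial : ℝ) ≤ ((n+1).factorial : ℝ) := by
      exact_mod_cast Nat.factorial_le (Nat.le_succ n)
    have h8 : (0:ℝ) < 8 ^ n := by positivity
    have h3 : (8:ℝ) * (8 ^ n * n.factorial) ≤ 8 ^ (n+1) * ((n+1).factorial : ℝ) := by
      rw [pow_succ]; nlinarith
    push_cast
    calc ((n : ℝ) + 1 + 1) ^ 3 ≤ 8 * ((n : ℝ) + 1) ^ 3 := h1
      _ ≤ 8 * (8 ^ n * n.factorial) := by gcongr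
      _ ≤ 8 ^ (n + 1) * ((n+1).factorial : ℝ) := h3

lemma master (a : ℕ → ℝ) (hb : Dec a) (R : ℝ) (hR : 0 ≤ R) :
    Summable (fun k : ℕ => ((k : ℝ) + 1) ^ 3 * |a (k + 1)| * R ^ k) := by
  refine Summable.of_nonneg_of_le (fun k => by beta_reduce; positivity) (fun k => ?_)
    (Real.summable_pow_div_factorial (2 * R))
  have h1 : (0:ℝ) < (Nat.factorial k : ℝ) := by exact_mod_cast k.factorial_pos
  have h4 : (0:ℝ) < 4 ^ k := by positivity
  have hRk : (0:ℝ) ≤ R ^ k := by positivity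
  calc ((k : ℝ) + 1) ^ 3 * |a (k + 1)| * R ^ k
      ≤ (8 ^ k * (Nat.factorial k)) * (1 / (4 ^ k * (Nat.factorial k) ^ 2)) * R ^ k := by
        have := hb k
        have h2 := cube_le k
        gcongr <;> first | positivity | exact abs_nonneg _ | exact h2 | exact this
    _ = (2 * R) ^ k / (Nat.factorial k) := by
        have h8 : (8:ℝ) ^ k = 2 ^ k * 4 ^ k := by rw [← mul_pow]; norm_num
        rw [mul_pow, h8]
        field_simp

lemma gen_summable (a : ℕ → ℝ) (hb : Dec a) (f : ℕ → ℝ) (C R : ℝ) (hR : 0 ≤ R)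
    (hle : ∀ k, |f k| ≤ C * (((k : ℝ) + 1) ^ 3 * |a (k + 1)| * R ^ k)) : Summable f := by
  have : Summable (fun k : ℕ => |f k|) :=
    Summable.of_nonneg_of_le (fun k => abs_nonneg _) hle ((master a hb R hR).mul_left C)
  exact this.of_abs

lemma inst_summable (a : ℕ → ℝ) (hb : Dec a) (N : ℕ → ℝ) (e : ℕ → ℕ) (R : ℝ) (hR : 1 ≤ R)
    (hN : ∀ k, 0 ≤ N k) (hN12 : ∀ k, N k ≤ 12 * ((k : ℝ) + 1) ^ 3)
    (he : ∀ k, e k ≤ 2 * k + 2) :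
    Summable (fun k => N k * |a (k + 1)| * R ^ (e k)) := by
  have hR0 : (0:ℝ) ≤ R := by linarith
  apply gen_summable a hb _ (12 * R ^ 2) (R ^ 2) (by positivity)
  intro k
  rw [abs_of_nonneg (mul_nonneg (mul_nonneg (hN k) (abs_nonneg _)) (by positivity))]
  calc N k * |a (k + 1)| * R ^ (e k)
      ≤ (12 * ((k : ℝ) + 1) ^ 3) * |a (k + 1)| * (R ^ 2 * (R ^ 2) ^ k) := by
        gcongr
        · exact hN12 k
        · calc R ^ (e k) ≤ R ^ (2 * k + 2) := pow_le_pow_right₀ hR (he k)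
            _ = R ^ 2 * (R ^ 2) ^ k := by
                rw [← pow_mul, ← pow_add]; congr 1; omega
    _ = 12 * R ^ 2 * (((k : ℝ) + 1) ^ 3 * |a (k + 1)| * (R ^ 2) ^ k) := by ring

lemma inst_summable' (a : ℕ → ℝ) (hb : Dec a) (N : ℕ → ℝ) (e : ℕ → ℕ) (x : ℝ)
    (hN : ∀ k, 0 ≤ N k) (hN12 : ∀ k, N k ≤ 12 * ((k : ℝ) + 1) ^ 3)
    (he : ∀ k, e k ≤ 2 * k + 2) :
    Summable (fun k => N k * a (k + 1) * x ^ (e k)) := by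
  have hR : (1:ℝ) ≤ |x| + 1 := by linarith [abs_nonneg x]
  apply Summable.of_abs
  refine Summable.of_nonneg_of_le (fun k => abs_nonneg _) (fun k => ?_)
    (inst_summable a hb N e (|x| + 1) hR hN hN12 he)
  rw [abs_mul, abs_mul, abs_pow, abs_of_nonneg (hN k)]
  exact mul_le_mul_of_nonneg_left
    (pow_le_pow_left₀ (abs_nonneg x) (by linarith [abs_nonneg x]) _)
    (mul_nonneg (hN k) (abs_nonneg _))

lemma monomial_hasDerivAt (c : ℕ → ℝ) (e : ℕ → ℕ)
    (hs : ∀ R : ℝ, 1 ≤ R → Summable (fun k => |c k| * (e k : ℝ) * R ^ (e k - 1)))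
    (hs0 : Summable (fun k => c k * (0 : ℝ) ^ (e k))) (x : ℝ) :
    HasDerivAt (fun y : ℝ => ∑' k, c k * y ^ (e k))
      (∑' k, c k * ((e k : ℝ) * x ^ (e k - 1))) x := by
  set R : ℝ := |x| + 1 with hRdef
  have hR1 : (1:ℝ) ≤ R := by simp only [hRdef]; linarith [abs_nonneg x]
  have hR0 : (0:ℝ) < R := lt_of_lt_of_le one_pos hR1
  apply hasDerivAt_tsum_of_isPreconnected (hs R hR1) (Metric.isOpen_ball (x := (0:ℝ)) (ε := R))
    (convex_ball (0:ℝ) R).isPreconnected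
    (fun n y _ => HasDerivAt.const_mul (c n) (hasDerivAt_pow (e n) y))
  · intro n y hy
    have hyR : |y| ≤ R := by
      have h := Metric.mem_ball.mp hy
      rw [Real.dist_eq, sub_zero] at h
      linarith
    have h1 : |y| ^ (e n - 1) ≤ R ^ (e n - 1) := pow_le_pow_left₀ (abs_nonneg y) hyR _
    calc ‖c n * ((e n : ℝ) * y ^ (e n - 1))‖
        = |c n| * ((e n : ℝ) * |y| ^ (e n - 1)) := by
          rw [norm_mul, norm_mul, norm_pow]; simp [Nat.abs_cast]
      _ ≤ |c n| * ((e n : ℝ) * R ^ (e n - 1)) := by gcongr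
      _ = |c n| * (e n : ℝ) * R ^ (e n - 1) := by ring
  · exact Metric.mem_ball_self hR0
  · exact hs0
  · rw [Metric.mem_ball, Real.dist_eq, sub_zero]; simp only [hRdef]; linarith [abs_nonneg x]

/-- For every `(x,y) ∈ ℝ²`, `h(x,y) > √5`, where
`h(x,y) = 2X₀(x) − x X₀'(x) + y² g(x) + √5`. -/
theorem stmt6 (a : ℕ → ℝ) (ha1 : a 1 = 1)
    (harec : ∀ k : ℕ, 1 ≤ k →
      2 * ((k : ℝ) + 1) * (4 * (k : ℝ) ^ 2 + 5 / 4) * a (k + 1) + (2 * (k : ℝ) - 1) * a k = 0)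
    (X0 : ℝ → ℝ)
    (hX0 : ∀ x : ℝ, HasSum (fun k : ℕ => a (k + 1) * x ^ (2 * (k + 1))) (X0 x - 5 / 2))
    (g : ℝ → ℝ) (hganal : AnalyticOnNhd ℝ g Set.univ)
    (hg : ∀ x : ℝ, x ≠ 0 → g x = deriv X0 x / x) (hg0 : g 0 = 2) :
    ∀ x y : ℝ,
      Real.sqrt 5 < 2 * X0 x - x * deriv X0 x + y ^ 2 * g x + Real.sqrt 5 := by
  -- Step 1: decay of coefficients
  have hb : Dec a := by
    intro k
    induction k with
    | zero => simp [ha1]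
    | succ n ih =>
      have hrec := harec (n + 1) (by omega)
      push_cast at hrec
      have hC : (0:ℝ) < 2 * ((n:ℝ) + 1 + 1) * (4 * ((n:ℝ) + 1) ^ 2 + 5/4) := by positivity
      have hd : (0:ℝ) ≤ 2 * ((n:ℝ) + 1) - 1 := by
        have : (0:ℝ) ≤ (n:ℝ) := n.cast_nonneg
        linarith
      have hidx : n + 1 + 1 = n + 2 := rfl
      rw [hidx] at hrec
      have habs : (2 * ((n:ℝ) + 1 + 1) * (4 * ((n:ℝ) + 1) ^ 2 + 5/4)) * |a (n + 2)|
          = (2 * ((n:ℝ) + 1) - 1) * |a (n + 1)| := by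
        rw [← abs_of_nonneg hC.le, ← abs_mul, ← abs_of_nonneg hd, ← abs_mul,
          ← abs_neg ((2 * ((n:ℝ) + 1) - 1) * a (n + 1))]
        congr 1
        linarith [hrec]
      have hstep : |a (n + 2)| ≤ |a (n + 1)| / (4 * ((n:ℝ) + 1) ^ 2) := by
        rw [le_div_iff₀ (by positivity)]
        nlinarith [habs, abs_nonneg (a (n + 1)), abs_nonneg (a (n + 2)),
          (Nat.cast_nonneg n : (0:ℝ) ≤ (n:ℝ))]
      have hfact : ((n+1).factorial : ℝ) = ((n:ℝ) + 1) * (n.factorial : ℝ) := by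
        rw [Nat.factorial_succ]; push_cast; ring
      have hnf : (0:ℝ) < (n.factorial : ℝ) := by exact_mod_cast n.factorial_pos
      have h4n : (0:ℝ) < 4 ^ n := by positivity
      calc |a (n + 1 + 1)| ≤ |a (n + 1)| / (4 * ((n:ℝ) + 1) ^ 2) := hstep
        _ ≤ (1 / (4 ^ n * (n.factorial : ℝ) ^ 2)) / (4 * ((n:ℝ) + 1) ^ 2) := by
            gcongr <;> first | positivity | exact ih
        _ = 1 / (4 ^ (n+1) * ((n+1).factorial : ℝ) ^ 2) := by
            rw [hfact, pow_succ]
            field_simp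
            ring
  -- summability instances at a point
  have hsG : ∀ x : ℝ, Summable (fun k : ℕ => (2*(k:ℝ)+2) * a (k+1) * x ^ (2*k)) := by
    intro x
    exact inst_summable' a hb (fun k => 2*(k:ℝ)+2) (fun k => 2*k) x
      (fun k => by beta_reduce; positivity)
      (fun k => by beta_reduce; nlinarith [(Nat.cast_nonneg k : (0:ℝ) ≤ (k:ℝ)), sq_nonneg ((k:ℝ)), pow_nonneg (Nat.cast_nonneg k : (0:ℝ) ≤ (k:ℝ)) 3])
      (fun k => by beta_reduce; omega)
  have hsD2 : ∀ x : ℝ, Summable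
      (fun k : ℕ => (2*(k:ℝ)+2) * (2*(k:ℝ)) * a (k+1) * x ^ (2*k-1)) := by
    intro x
    exact inst_summable' a hb (fun k => (2*(k:ℝ)+2) * (2*(k:ℝ))) (fun k => 2*k-1) x
      (fun k => by beta_reduce; positivity)
      (fun k => by beta_reduce; nlinarith [(Nat.cast_nonneg k : (0:ℝ) ≤ (k:ℝ)), sq_nonneg ((k:ℝ)), pow_nonneg (Nat.cast_nonneg k : (0:ℝ) ≤ (k:ℝ)) 3])
      (fun k => by beta_reduce; omega)
  have hcast21 : ∀ k : ℕ, ((2*k-1 : ℕ) : ℝ) ≤ 2*(k:ℝ) := by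
    intro k
    have h := (Nat.cast_le (α := ℝ)).mpr (show 2*k-1 ≤ 2*k by omega)
    push_cast at h
    exact h
  have hsD3 : ∀ x : ℝ, Summable
      (fun k : ℕ => (2*(k:ℝ)+2) * (2*(k:ℝ)) * ((2*k-1 : ℕ) : ℝ) * a (k+1) * x ^ (2*k-1-1)) := by
    intro x
    refine inst_summable' a hb (fun k => (2*(k:ℝ)+2) * (2*(k:ℝ)) * ((2*k-1 : ℕ) : ℝ))
      (fun k => 2*k-1-1) x (fun k => by beta_reduce; positivity) (fun k => ?_) (fun k => by beta_reduce; omega)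
    beta_reduce
    nlinarith [hcast21 k, (Nat.cast_nonneg k : (0:ℝ) ≤ (k:ℝ)), sq_nonneg ((k:ℝ)),
      pow_nonneg (Nat.cast_nonneg k : (0:ℝ) ≤ (k:ℝ)) 3,
      (Nat.cast_nonneg (2*k-1) : (0:ℝ) ≤ ((2*k-1:ℕ):ℝ)),
      mul_le_mul_of_nonneg_left (hcast21 k)
        (show (0:ℝ) ≤ (2*(k:ℝ)+2) * (2*(k:ℝ)) by positivity)]
  have hsu : ∀ x : ℝ, Summable
      (fun k : ℕ => (2*(k:ℝ)+2) * (4*(k:ℝ)^2 + 5/4) * a (k+1) * x ^ (2*k)) := by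
    intro x
    exact inst_summable' a hb (fun k => (2*(k:ℝ)+2) * (4*(k:ℝ)^2 + 5/4)) (fun k => 2*k) x
      (fun k => by beta_reduce; positivity)
      (fun k => by beta_reduce; nlinarith [(Nat.cast_nonneg k : (0:ℝ) ≤ (k:ℝ)), sq_nonneg ((k:ℝ)), pow_nonneg (Nat.cast_nonneg k : (0:ℝ) ≤ (k:ℝ)) 3])
      (fun k => by beta_reduce; omega)
  have hsv : ∀ x : ℝ, Summable (fun k : ℕ => (2*(k:ℝ)+2) * a (k+1) * x ^ (2*k+2)) := by
    intro x
    exact inst_summable' a hb (fun k => 2*(k:ℝ)+2) (fun k => 2*k+2) x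
      (fun k => by beta_reduce; positivity)
      (fun k => by beta_reduce; nlinarith [(Nat.cast_nonneg k : (0:ℝ) ≤ (k:ℝ)), sq_nonneg ((k:ℝ)), pow_nonneg (Nat.cast_nonneg k : (0:ℝ) ≤ (k:ℝ)) 3])
      (fun k => by beta_reduce; omega)
  have hsw : ∀ x : ℝ, Summable (fun k : ℕ => (2*(k:ℝ)+1) * a (k+1) * x ^ (2*k+2)) := by
    intro x
    exact inst_summable' a hb (fun k => 2*(k:ℝ)+1) (fun k => 2*k+2) x
      (fun k => by beta_reduce; positivity)
      (fun k => by beta_reduce; nlinarith [(Nat.cast_nonneg k : (0:ℝ) ≤ (k:ℝ)), sq_nonneg ((k:ℝ)), pow_nonneg (Nat.cast_nonneg k : (0:ℝ) ≤ (k:ℝ)) 3])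
      (fun k => by beta_reduce; omega)
  -- X0 as explicit series
  have hX0eq : ∀ y : ℝ, X0 y = 5/2 + ∑' k : ℕ, a (k+1) * y ^ (2*k+2) := by
    intro y
    have h := (hX0 y).tsum_eq
    have h2 : ∑' k : ℕ, a (k+1) * y ^ (2*k+2) = X0 y - 5/2 := by
      rw [← h]
      exact tsum_congr fun k => by rw [show 2*k+2 = 2*(k+1) from by ring]
    linarith
  -- derivative of X0
  have hX0der : ∀ t : ℝ, HasDerivAt X0 (t * Gf a t) t := by
    intro t
    have hs : ∀ R : ℝ, 1 ≤ R →
        Summable (fun k : ℕ => |a (k+1)| * ((2*k+2 : ℕ) : ℝ) * R ^ (2*k+2-1)) := by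
      intro R hR
      refine Summable.congr (inst_summable a hb (fun k => ((2*k+2 : ℕ) : ℝ))
        (fun k => 2*k+2-1) R hR (fun k => by beta_reduce; positivity) (fun k => ?_) (fun k => by beta_reduce; omega))
        (fun k => by beta_reduce; ring)
      beta_reduce
      push_cast
      nlinarith [(Nat.cast_nonneg k : (0:ℝ) ≤ (k:ℝ)), sq_nonneg ((k:ℝ)), pow_nonneg (Nat.cast_nonneg k : (0:ℝ) ≤ (k:ℝ)) 3]
    have hs0 : Summable (fun k : ℕ => a (k+1) * (0:ℝ) ^ (2*k+2)) := by
      refine summable_of_ne_finset_zero (s := (∅ : Finset ℕ)) fun k _ => ?_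
      rw [zero_pow (show 2*k+2 ≠ 0 by omega), mul_zero]
    have h := monomial_hasDerivAt (fun k => a (k+1)) (fun k => 2*k+2) hs hs0 t
    have heq : (∑' k : ℕ, a (k+1) * (((2*k+2 : ℕ) : ℝ) * t ^ (2*k+2-1))) = t * Gf a t := by
      simp only [Gf]
      rw [← tsum_mul_left]
      refine tsum_congr fun k => ?_
      rw [show 2*k+2-1 = 2*k+1 from by omega]
      push_cast
      ring
    rw [funext hX0eq, ← heq]
    exact HasDerivAt.const_add _ h
  -- derivative of G
  have hGder : ∀ t : ℝ, HasDerivAt (Gf a) (D2f a t) t := by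
    intro t
    have hs : ∀ R : ℝ, 1 ≤ R →
        Summable (fun k : ℕ => |(2*(k:ℝ)+2) * a (k+1)| * ((2*k : ℕ) : ℝ) * R ^ (2*k-1)) := by
      intro R hR
      refine Summable.congr (inst_summable a hb (fun k => (2*(k:ℝ)+2) * ((2*k : ℕ) : ℝ))
        (fun k => 2*k-1) R hR (fun k => by beta_reduce; positivity) (fun k => ?_) (fun k => by beta_reduce; omega))
        (fun k => ?_)
      · beta_reduce
        push_cast
        nlinarith [(Nat.cast_nonneg k : (0:ℝ) ≤ (k:ℝ)), sq_nonneg ((k:ℝ)), pow_nonneg (Nat.cast_nonneg k : (0:ℝ) ≤ (k:ℝ)) 3]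
      · rw [abs_mul, abs_of_nonneg (show (0:ℝ) ≤ 2*(k:ℝ)+2 by positivity)]
        ring
    have hs0 : Summable (fun k : ℕ => ((2*(k:ℝ)+2) * a (k+1)) * (0:ℝ) ^ (2*k)) := by
      refine summable_of_ne_finset_zero (s := ({0} : Finset ℕ)) fun k hk => ?_
      rw [zero_pow (show 2*k ≠ 0 by simp at hk; omega), mul_zero]
    have h := monomial_hasDerivAt (fun k => (2*(k:ℝ)+2) * a (k+1)) (fun k => 2*k) hs hs0 t
    have heq : (∑' k : ℕ, ((2*(k:ℝ)+2) * a (k+1)) * (((2*k : ℕ) : ℝ) * t ^ (2*k-1)))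
        = D2f a t := by
      simp only [D2f]
      refine tsum_congr fun k => ?_
      push_cast
      ring
    rw [show D2f a t = _ from heq.symm]
    exact h
  -- derivative of D2
  have hD2der : ∀ t : ℝ, HasDerivAt (D2f a) (D3f a t) t := by
    intro t
    have hs : ∀ R : ℝ, 1 ≤ R → Summable
        (fun k : ℕ => |(2*(k:ℝ)+2) * (2*(k:ℝ)) * a (k+1)| * ((2*k-1 : ℕ) : ℝ) * R ^ (2*k-1-1)) := by
      intro R hR
      refine Summable.congr (inst_summable a hb
        (fun k => (2*(k:ℝ)+2) * (2*(k:ℝ)) * ((2*k-1 : ℕ) : ℝ))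
        (fun k => 2*k-1-1) R hR (fun k => by beta_reduce; positivity) (fun k => ?_) (fun k => by beta_reduce; omega))
        (fun k => ?_)
      · beta_reduce
        nlinarith [hcast21 k, (Nat.cast_nonneg k : (0:ℝ) ≤ (k:ℝ)), sq_nonneg ((k:ℝ)),
          pow_nonneg (Nat.cast_nonneg k : (0:ℝ) ≤ (k:ℝ)) 3,
          (Nat.cast_nonneg (2*k-1) : (0:ℝ) ≤ ((2*k-1:ℕ):ℝ)),
          mul_le_mul_of_nonneg_left (hcast21 k)
            (show (0:ℝ) ≤ (2*(k:ℝ)+2) * (2*(k:ℝ)) by positivity)]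
      · rw [abs_mul, abs_mul, abs_of_nonneg (show (0:ℝ) ≤ 2*(k:ℝ)+2 by positivity),
          abs_of_nonneg (show (0:ℝ) ≤ 2*(k:ℝ) by positivity)]
        ring
    have hs0 : Summable
        (fun k : ℕ => ((2*(k:ℝ)+2) * (2*(k:ℝ)) * a (k+1)) * (0:ℝ) ^ (2*k-1)) := by
      refine summable_of_ne_finset_zero (s := ({0} : Finset ℕ)) fun k hk => ?_
      rw [zero_pow (show 2*k-1 ≠ 0 by simp at hk; omega), mul_zero]
    have h := monomial_hasDerivAt (fun k => (2*(k:ℝ)+2) * (2*(k:ℝ)) * a (k+1))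
      (fun k => 2*k-1) hs hs0 t
    have heq : (∑' k : ℕ, ((2*(k:ℝ)+2) * (2*(k:ℝ)) * a (k+1))
        * (((2*k-1 : ℕ) : ℝ) * t ^ (2*k-1-1))) = D3f a t := by
      simp only [D3f]
      refine tsum_congr fun k => ?_
      ring
    rw [show D3f a t = _ from heq.symm]
    exact h
  -- the ODE identity
  have hODE : ∀ x : ℝ, x^2 * D3f a x + x * D2f a x + (5/4 + x^2) * Gf a x = X0 x := by
    intro x
    have hA : Summable (fun k : ℕ => x^2 *
        ((2*(k:ℝ)+2) * (2*(k:ℝ)) * ((2*k-1 : ℕ) : ℝ) * a (k+1) * x ^ (2*k-1-1))) :=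
      (hsD3 x).mul_left _
    have hB : Summable (fun k : ℕ => x *
        ((2*(k:ℝ)+2) * (2*(k:ℝ)) * a (k+1) * x ^ (2*k-1))) := (hsD2 x).mul_left _
    have hC : Summable (fun k : ℕ => (5/4 + x^2) *
        ((2*(k:ℝ)+2) * a (k+1) * x ^ (2*k))) := (hsG x).mul_left _
    have h1 : x^2 * D3f a x + x * D2f a x + (5/4 + x^2) * Gf a x
        = ∑' k : ℕ, (x^2 * ((2*(k:ℝ)+2) * (2*(k:ℝ)) * ((2*k-1 : ℕ) : ℝ) * a (k+1) * x ^ (2*k-1-1))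
          + (x * ((2*(k:ℝ)+2) * (2*(k:ℝ)) * a (k+1) * x ^ (2*k-1))
            + (5/4 + x^2) * ((2*(k:ℝ)+2) * a (k+1) * x ^ (2*k)))) := by
      rw [Summable.tsum_add hA (hB.add hC), Summable.tsum_add hB hC, tsum_mul_left, tsum_mul_left, tsum_mul_left]
      simp only [Gf, D2f, D3f]
      ring
    have h2 : (∑' k : ℕ,
        (x^2 * ((2*(k:ℝ)+2) * (2*(k:ℝ)) * ((2*k-1 : ℕ) : ℝ) * a (k+1) * x ^ (2*k-1-1))
          + (x * ((2*(k:ℝ)+2) * (2*(k:ℝ)) * a (k+1) * x ^ (2*k-1))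
            + (5/4 + x^2) * ((2*(k:ℝ)+2) * a (k+1) * x ^ (2*k)))))
        = ∑' k : ℕ, ((2*(k:ℝ)+2) * (4*(k:ℝ)^2 + 5/4) * a (k+1) * x ^ (2*k)
            + (2*(k:ℝ)+2) * a (k+1) * x ^ (2*k+2)) := by
      refine tsum_congr fun k => ?_
      rcases k with _ | j
      · norm_num
        ring
      · have e1 : 2*(j+1)-1-1 = 2*j := by omega
        have e2 : 2*(j+1)-1 = 2*j+1 := by omega
        have e3 : ((2*(j+1)-1 : ℕ) : ℝ) = 2*(j:ℝ)+1 := by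
          rw [e2]; push_cast; ring
        rw [e3, e1, e2]
        push_cast
        ring
    have h3 : (∑' k : ℕ, ((2*(k:ℝ)+2) * (4*(k:ℝ)^2 + 5/4) * a (k+1) * x ^ (2*k)
            + (2*(k:ℝ)+2) * a (k+1) * x ^ (2*k+2)))
        = (∑' k : ℕ, (2*(k:ℝ)+2) * (4*(k:ℝ)^2 + 5/4) * a (k+1) * x ^ (2*k))
          + ∑' k : ℕ, (2*(k:ℝ)+2) * a (k+1) * x ^ (2*k+2) := Summable.tsum_add (hsu x) (hsv x)
    have h4 : (∑' k : ℕ, (2*(k:ℝ)+2) * (4*(k:ℝ)^2 + 5/4) * a (k+1) * x ^ (2*k))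
        = 5/2 + -∑' k : ℕ, (2*(k:ℝ)+1) * a (k+1) * x ^ (2*k+2) := by
      rw [Summable.tsum_eq_zero_add (hsu x)]
      congr 1
      · norm_num [ha1]
      · rw [← tsum_neg]
        refine tsum_congr fun k => ?_
        have h := harec (k+1) (by omega)
        have hidx : k + 1 + 1 = k + 2 := rfl
        rw [hidx] at h
        push_cast at h ⊢
        linear_combination x ^ (2*(k+1)) * h
    have h5 : (∑' k : ℕ, (2*(k:ℝ)+2) * a (k+1) * x ^ (2*k+2))
        - (∑' k : ℕ, (2*(k:ℝ)+1) * a (k+1) * x ^ (2*k+2)) = X0 x - 5/2 := by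
      rw [← Summable.tsum_sub (hsv x) (hsw x), ← (hX0 x).tsum_eq]
      refine tsum_congr fun k => ?_
      rw [show 2*(k+1) = 2*k+2 from by ring]
      ring
    rw [h1, h2, h3, h4]
    linarith [h5]
  -- values at 0
  have hG0 : Gf a 0 = 2 := by
    simp only [Gf]
    rw [tsum_eq_single 0 (fun k hk => by
      rw [zero_pow (show 2*k ≠ 0 by omega), mul_zero])]
    norm_num [ha1]
  have hD20 : D2f a 0 = 0 := by
    simp only [D2f]
    have hz : ∀ k : ℕ, (2*(k:ℝ)+2) * (2*(k:ℝ)) * a (k+1) * (0:ℝ) ^ (2*k-1) = 0 := by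
      intro k
      rcases Nat.eq_zero_or_pos k with hk | hk
      · subst hk; norm_num
      · rw [zero_pow (show 2*k-1 ≠ 0 by omega), mul_zero]
    calc (∑' k : ℕ, (2*(k:ℝ)+2) * (2*(k:ℝ)) * a (k+1) * (0:ℝ) ^ (2*k-1))
        = ∑' _ : ℕ, (0:ℝ) := tsum_congr hz
      _ = 0 := tsum_zero
  have hX00 : X0 0 = 5/2 := by
    rw [hX0eq 0]
    have hz : ∀ k : ℕ, a (k+1) * (0:ℝ) ^ (2*k+2) = 0 := fun k => by
      rw [zero_pow (show 2*k+2 ≠ 0 by omega), mul_zero]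
    rw [tsum_congr hz, tsum_zero]
    norm_num
  -- the first integral E is constant, hence ≡ 0
  have hEder : ∀ t : ℝ, HasDerivAt
      (fun s : ℝ => (s * D2f a s)^2 + (5/4 + s^2) * (Gf a s)^2 - 2 * Gf a s * X0 s + 5) 0 t := by
    intro t
    have h1 := hGder t
    have h2 := hD2der t
    have h3 := hX0der t
    have h4 : HasDerivAt (fun s : ℝ => s * D2f a s) (1 * D2f a t + t * D3f a t) t :=
      (hasDerivAt_id t).mul h2
    have h5 := h4.pow 2
    have h6 : HasDerivAt (fun s : ℝ => 5/4 + s^2) ((2:ℕ) * t ^ (2-1)) t :=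
      (hasDerivAt_pow 2 t).const_add (5/4)
    have h7 := h1.pow 2
    have h8 := h6.mul h7
    have h9 := (h1.const_mul (2:ℝ)).mul h3
    have h10 := ((h5.add h8).sub h9).add_const (5:ℝ)
    refine h10.congr_deriv (Eq.symm ?_)
    have hode := hODE t
    norm_num
    linear_combination (-(2:ℝ) * D2f a t) * hode
  have hEconst : ∀ t : ℝ,
      (t * D2f a t)^2 + (5/4 + t^2) * (Gf a t)^2 - 2 * Gf a t * X0 t + 5
      = (0 * D2f a 0)^2 + (5/4 + (0:ℝ)^2) * (Gf a 0)^2 - 2 * Gf a 0 * X0 0 + 5 := by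
    intro t
    have := is_const_of_deriv_eq_zero (f := fun s : ℝ =>
        (s * D2f a s)^2 + (5/4 + s^2) * (Gf a s)^2 - 2 * Gf a s * X0 s + 5)
      (fun s => (hEder s).differentiableAt) (fun s => (hEder s).deriv) t 0
    simpa using this
  have hkey : ∀ t : ℝ, 2 * Gf a t * X0 t = (t * D2f a t)^2 + (5/4 + t^2) * (Gf a t)^2 + 5 := by
    intro t
    have h := hEconst t
    rw [hG0, hX00, hD20] at h
    norm_num at h
    linarith
  -- positivity of G
  have hGpos : ∀ t : ℝ, 0 < Gf a t := by
    intro t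
    rcases lt_or_ge 0 (Gf a t) with h | h
    · exact h
    exfalso
    have hne : Gf a t ≠ 0 := by
      intro h0
      have hk := hkey t
      rw [h0] at hk
      nlinarith [sq_nonneg (t * D2f a t)]
    have hlt : Gf a t < 0 := lt_of_le_of_ne h hne
    have hcont : Continuous (Gf a) :=
      continuous_iff_continuousAt.mpr fun s => (hGder s).continuousAt
    have hsub := intermediate_value_uIcc (a := (0:ℝ)) (b := t) hcont.continuousOn
    have h0mem : (0:ℝ) ∈ uIcc (Gf a 0) (Gf a t) := by
      rw [hG0, mem_uIcc]
      right
      constructor <;> linarith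
    obtain ⟨z, _, hz⟩ := hsub h0mem
    have hk := hkey z
    rw [hz] at hk
    nlinarith [sq_nonneg (z * D2f a z)]
  -- conclusion
  intro x y
  have hd : deriv X0 x = x * Gf a x := (hX0der x).deriv
  have hgx : g x = Gf a x := by
    rcases eq_or_ne x 0 with rfl | hx
    · rw [hg0, hG0]
    · rw [hg x hx, hd]
      field_simp
  rw [hd, hgx, lt_add_iff_pos_left]
  have hk := hkey x
  have hg1 := hGpos x
  nlinarith [sq_nonneg (x * D2f a x), sq_nonneg (y * Gf a x), sq_nonneg (Gf a x),
    mul_pos hg1 hg1]
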